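/- Let G = G(m,n,k) with trivial centre, S a base, S* the multiplicative closure of S in ℤ_m, and for x ∈ S* define Y(x) = {s*·z : s* ∈ S*, z ∈ ℤ_m, ∃ s ∈ S with x ≡ s·s* (mod m)}. Then for y ∈ ℤ_m: y ∈ Y(x) if and only if C(x,y) ⊆ Σ_G(S). -/

import Mathlib

/-- `n = ind_m(k)`: `n` is the least positive integer with `k^n ≡ 1 (mod m)`. -/
def IsIndex (m k n : ℕ) : Prop :=
  0 < n ∧ k ^ n ≡ 1 [MOD m] ∧ ∀ d : ℕ, 0 < d → k ^ d ≡ 1 [MOD m] → n ≤ d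

/-- The mu-map `μ(x,y)` of `G = G(m,n,k)`, acting on elements of `G` written in
the normal form `a^i b^j` (identified with pairs `(i,j) ∈ ℤ_m × ℤ_n`):
`(a^i b^j) μ(x,y) = a^N` with `N ≡ x·i·k^j − y·(k^j − 1) (mod m)`. -/
def Mu (m n k : ℕ) (x y : ZMod m) : Function.End (ZMod m × ZMod n) :=
  fun p => (x * p.1 * (k : ZMod m) ^ p.2.val -
    y * ((k : ZMod m) ^ p.2.val - 1), 0)

/-- The container `C(x,y) = {μ(x, yz) : z ∈ ℤ_m}`. -/
def Container (m n k : ℕ) (x y : ZMod m) :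
    Set (Function.End (ZMod m × ZMod n)) :=
  {f | ∃ z : ZMod m, f = Mu m n k x (y * z)}
/-- The multiplicative closure `S*` of `S` in `ℤ_m`. -/
def mulClosure (m : ℕ) (S : Set (ZMod m)) : Set (ZMod m) :=
  Subsemigroup.closure S

/-- `S ⊆ ℤ_m` is a base if it contains `0` and at least one unit of `ℤ_m`. -/
def IsBase (m : ℕ) (S : Set (ZMod m)) : Prop :=
  (0 : ZMod m) ∈ S ∧ ∃ u ∈ S, IsUnit u

/-- The set `Γ_μ(S) = {μ(s,z) : s ∈ S, z ∈ ℤ_m}` of mu-generators. -/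
def GammaMu (m n k : ℕ) (S : Set (ZMod m)) :
    Set (Function.End (ZMod m × ZMod n)) :=
  {f | ∃ s ∈ S, ∃ z : ZMod m, f = Mu m n k s z}

/-- The set `Π_μ(S) = {μ(s·s*, s*·z) : s ∈ S, s* ∈ S*, z ∈ ℤ_m}` of
mu-products. -/
def PiMu (m n k : ℕ) (S : Set (ZMod m)) :
    Set (Function.End (ZMod m × ZMod n)) :=
  {f | ∃ s ∈ S, ∃ t ∈ mulClosure m S, ∃ z : ZMod m,
    f = Mu m n k (s * t) (t * z)}

/-- The `G`-semigroup `Σ_G(S)`: the subsemigroup of `M(G)` (under composition)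
generated by `Γ_μ(S)`. -/
def SigmaG (m n k : ℕ) (S : Set (ZMod m)) :
    Set (Function.End (ZMod m × ZMod n)) :=
  Subsemigroup.closure (GammaMu m n k S)
/-- The set `Y(x) = {s*·z : s* ∈ S*, z ∈ ℤ_m, ∃ s ∈ S with x = s·s* (mod m)}`. -/
def Yset (m : ℕ) (S : Set (ZMod m)) (x : ZMod m) : Set (ZMod m) :=
  {w | ∃ t ∈ mulClosure m S, ∃ z : ZMod m, w = t * z ∧ ∃ s ∈ S, x = s * t}

/-!
Composition of mu-maps is `μ(x,y) ∘ μ(x',y') = μ(xx', xy')`. By induction on words, this shows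
that `Σ_G(S)` is exactly the set `Π_μ(S)` of maps `μ(s·t, t·z)` with `s ∈ S`, `t ∈ S*`: one
inclusion needs `1 ∈ S*`, which holds because the unit of `S` has finite order. Moreover `μ(x,y)`
determines `x` (evaluate at `a`) and `y` (evaluate at `b`, as `k - 1` is a unit of `ℤ_m`).
Hence `C(x,y) ⊆ Σ_G(S)` iff `μ(x,y) ∈ Π_μ(S)` iff `y ∈ Y(x)`.
-/

theorem pow_succ_mem {M A : Type*} [Monoid M] [SetLike A M] [MulMemClass A M] {S : A} {u : M}
    (hu : u ∈ S) (j : ℕ) : u ^ (j + 1) ∈ S := by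
  induction j with
  | zero => simpa using hu
  | succ j ih => rw [pow_succ]; exact mul_mem ih hu

theorem Subsemigroup.one_mem_closure_of_isUnit {M : Type*} [Monoid M] [Finite Mˣ] {S : Set M}
    {u : M} (hu : u ∈ S) (hunit : IsUnit u) : (1 : M) ∈ closure S := by
  have hpos : 0 < orderOf u := (isOfFinOrder_iff_isUnit.mpr hunit).orderOf_pos
  rw [← pow_orderOf_eq_one u, ← Nat.sub_add_cancel hpos]
  exact pow_succ_mem (subset_closure hu) _

theorem isUnit_natCast_sub_one {m k : ℕ} (hcop : Nat.gcd m (k - 1) = 1) :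
    IsUnit ((k : ZMod m) - 1) := by
  cases k with
  | zero =>
    have : Subsingleton (ZMod m) := ZMod.subsingleton_iff.mpr (by simpa using hcop)
    exact isUnit_of_subsingleton _
  | succ j =>
    rw [Nat.cast_succ, add_sub_cancel_right, ZMod.isUnit_iff_coprime j m]
    simpa [Nat.coprime_comm] using hcop

section Mu

variable {m n k : ℕ}

theorem mu_mul_mu (x y x' y' : ZMod m) :
    Mu m n k x y * Mu m n k x' y' = Mu m n k (x * x') (x * y') := by
  funext p
  refine Prod.ext ?_ rfl
  change (Mu m n k x y (Mu m n k x' y' p)).1 = _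
  simp only [Mu, ZMod.val_zero, pow_zero]
  ring

theorem mu_zero_mem_sigmaG {S : Set (ZMod m)} {t : ZMod m} (ht : t ∈ mulClosure m S) :
    Mu m n k t 0 ∈ SigmaG m n k S := by
  induction ht using Subsemigroup.closure_induction with
  | mem s hs => exact Subsemigroup.subset_closure ⟨s, hs, 0, rfl⟩
  | mul a b _ _ iha ihb =>
    rw [show Mu m n k (a * b) 0 = Mu m n k a 0 * Mu m n k b 0 by rw [mu_mul_mu, mul_zero]]
    exact mul_mem iha ihb

theorem piMu_subset_sigmaG (S : Set (ZMod m)) : PiMu m n k S ⊆ SigmaG m n k S := by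
  rintro f ⟨s, hs, t, ht, z, rfl⟩
  induction ht using Subsemigroup.closure_induction generalizing s z with
  | mem t ht =>
    have hfactor : Mu m n k (s * t) (t * z) = Mu m n k t 0 * Mu m n k s z := by
      rw [mu_mul_mu, mul_comm s t]
    rw [hfactor]
    exact mul_mem (Subsemigroup.subset_closure ⟨t, ht, 0, rfl⟩)
      (Subsemigroup.subset_closure ⟨s, hs, z, rfl⟩)
  | mul a b ha _ _ ihb =>
    have hfactor : Mu m n k (s * (a * b)) (a * b * z)
        = Mu m n k a 0 * Mu m n k (s * b) (b * z) := by
      rw [mu_mul_mu]; ring_nf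
    rw [hfactor]
    exact mul_mem (mu_zero_mem_sigmaG ha) (ihb s hs z)

theorem sigmaG_subset_piMu {S : Set (ZMod m)} (h1 : (1 : ZMod m) ∈ mulClosure m S) :
    SigmaG m n k S ⊆ PiMu m n k S := by
  intro f hf
  induction hf using Subsemigroup.closure_induction with
  | mem g hg =>
    obtain ⟨s, hs, z, rfl⟩ := hg
    exact ⟨s, hs, 1, h1, z, by rw [mul_one, one_mul]⟩
  | mul _ _ _ _ iha ihb =>
    obtain ⟨s₁, hs₁, t₁, ht₁, z₁, rfl⟩ := iha
    obtain ⟨s₂, hs₂, t₂, ht₂, z₂, rfl⟩ := ihb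
    refine ⟨s₂, hs₂, s₁ * t₁ * t₂,
      mul_mem (mul_mem (Subsemigroup.subset_closure hs₁) ht₁) ht₂, z₂, ?_⟩
    rw [mu_mul_mu]; ring_nf

theorem eq_and_eq_of_mu_eq_mu (hunit : IsUnit ((k : ZMod m) - 1))
    (hkn : (k : ZMod m) ^ n = 1) {x y x' y' : ZMod m} (h : Mu m n k x y = Mu m n k x' y') :
    x = x' ∧ y = y' := by
  have hx : x = x' := by simpa [Mu] using congrArg (fun f => (f (1, 0)).1) h
  refine ⟨hx, ?_⟩
  rcases eq_or_ne n 1 with rfl | hn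
  · -- `k ≡ 1`, so `0 = k - 1` is a unit and `ℤ_m` is trivial
    rw [pow_one, ← sub_eq_zero] at hkn
    rw [hkn, isUnit_zero_iff] at hunit
    exact (subsingleton_of_zero_eq_one hunit).elim y y'
  · have hb := congrArg (fun f => (f (0, 1)).1) h
    simp only [Mu, ZMod.val_one'' hn, pow_one, mul_zero, zero_mul, zero_sub, neg_inj] at hb
    exact hunit.mul_right_cancel hb

end Mu

theorem stmt_15_general (m n k : ℕ)
    (hcop : Nat.gcd m (k - 1) = 1) (hind : IsIndex m k n)
    (S : Set (ZMod m)) (hS : IsBase m S)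
    (x : ZMod m) (y : ZMod m) :
    y ∈ Yset m S x ↔ Container m n k x y ⊆ SigmaG m n k S := by
  obtain ⟨-, u, hu, hunit⟩ := hS
  constructor
  · rintro ⟨t, ht, z, rfl, s, hs, rfl⟩ f ⟨z', rfl⟩
    exact piMu_subset_sigmaG S ⟨s, hs, t, ht, z * z', by rw [mul_assoc]⟩
  · intro h
    have hmem : Mu m n k x y ∈ PiMu m n k S :=
      sigmaG_subset_piMu (Subsemigroup.one_mem_closure_of_isUnit hu hunit)
        (h ⟨1, by rw [mul_one]⟩)
    obtain ⟨s, hs, t, ht, z, heq⟩ := hmem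
    have hkn : (k : ZMod m) ^ n = 1 := by
      exact_mod_cast (ZMod.natCast_eq_natCast_iff _ _ _).mpr hind.2.1
    obtain ⟨rfl, rfl⟩ := eq_and_eq_of_mu_eq_mu (isUnit_natCast_sub_one hcop) hkn heq
    exact ⟨t, ht, z, rfl, s, hs, rfl⟩

/-- for `x ∈ S*` and `y ∈ ℤ_m`: `y ∈ Y(x)` iff
`C(x,y) ⊆ Σ_G(S)`. -/
theorem stmt_15 (m n k : ℕ) (hm : 0 < m) (hk : 0 < k)
    (hcop : Nat.gcd m (k - 1) = 1) (hind : IsIndex m k n)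
    (S : Set (ZMod m)) (hS : IsBase m S)
    (x : ZMod m) (hx : x ∈ mulClosure m S) (y : ZMod m) :
    y ∈ Yset m S x ↔ Container m n k x y ⊆ SigmaG m n k S :=
  stmt_15_general m n k hcop hind S hS x y
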